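/- Let n ≥ 1, let W be the split orthogonal space of dimension 2n+1 over ℝ (its bilinear form has signature (n+1,n)), and let f ∈ ℝ[x] be a monic polynomial of degree 2n+1 with 2n+1 distinct roots, all of them real. Then the group SO(W)(ℝ), acting by conjugation T ↦ gTg⁻¹ on the set of self-adjoint endomorphisms T of W with characteristic polynomial f, has exactly binomial(2n+1, n) orbits. -/

import Mathlib

open Polynomial

/-- The Gram matrix of the split orthogonal space of dimension `2n+1`, in the standard
basis `e₁, …, eₙ, u, fₙ, …, f₁`: it is the anti-diagonal matrix of `1`s (of signature
`(n+1, n)` over `ℝ`). -/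
def splitGram (k : Type*) [Field k] (n : ℕ) : Matrix (Fin (2 * n + 1)) (Fin (2 * n + 1)) k :=
  Matrix.of fun i j => if (i : ℕ) + (j : ℕ) = 2 * n then 1 else 0

/-- The symmetric bilinear form `⟨·,·⟩` of the split orthogonal space of dimension `2n+1`. -/
def splitBilin {k : Type*} [Field k] {n : ℕ} (v w : Fin (2 * n + 1) → k) : k :=
  dotProduct v ((splitGram k n).mulVec w)

/-!
A self-adjoint `T` with simple real spectrum `r` has an eigenbasis, unique up to rescaling each
vector, and eigenvectors for distinct eigenvalues are orthogonal. As the form is nondegenerate, the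
eigenvectors can be rescaled to `⟨vᵢ, vᵢ⟩ = ±1`; the set `s` of indices with `⟨vᵢ, vᵢ⟩ = 1` is then
a complete invariant of the `O(W)`-orbit of `T`, since the isometry matching two such normalised
eigenbases conjugates one operator into the other. In odd dimension `-1 ∈ O(W)` has determinant
`-1`, so `SO(W)`-orbits are `O(W)`-orbits. By Sylvester's law of inertia the invariants that occur
are exactly the `(n+1)`-subsets: `e₁, …, eₙ` span a totally isotropic subspace and `e₁, …, eₙ, u`
a positive semidefinite one, while the spectral theorem and a permutation of the basis realise
every `(n+1)`-subset.
-/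

open Matrix

theorem Nat.card_quot_eq_of_classifying {α β : Type*} {rel : α → α → Prop} (R : α → β → Prop)
    (exists_R : ∀ a, ∃ b, R a b) (R_unique : ∀ {a b₁ b₂}, R a b₁ → R a b₂ → b₁ = b₂)
    (R_of_rel : ∀ {a₁ a₂ b}, rel a₁ a₂ → R a₁ b → R a₂ b)
    (rel_of_R : ∀ {a₁ a₂ b}, R a₁ b → R a₂ b → rel a₁ a₂) (surj : ∀ b, ∃ a, R a b) :
    Nat.card (Quot rel) = Nat.card β := by
  choose φ hφ using exists_R
  refine Nat.card_eq_of_bijective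
    (Quot.lift φ fun a₁ a₂ h => R_unique (R_of_rel h (hφ a₁)) (hφ a₂)) ⟨?_, fun b => ?_⟩
  · rintro ⟨a₁⟩ ⟨a₂⟩ (h : φ a₁ = φ a₂)
    exact Quot.sound (rel_of_R (hφ a₁) (h ▸ hφ a₂))
  · obtain ⟨a, ha⟩ := surj b
    exact ⟨Quot.mk _ a, R_unique (hφ a) ha⟩

lemma Finset.exists_perm_apply_mem_iff {ι : Type*} [Fintype ι] [DecidableEq ι] {s t : Finset ι}
    (hst : s.card = t.card) : ∃ σ : Equiv.Perm ι, ∀ i, σ i ∈ t ↔ i ∈ s := by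
  obtain ⟨e⟩ : Nonempty ({i // i ∈ s} ≃ {i // i ∈ t}) := Fintype.card_eq.mp (by simp [hst])
  obtain ⟨f⟩ : Nonempty ({i // i ∉ s} ≃ {i // i ∉ t}) :=
    Fintype.card_eq.mp (by simp [Fintype.card_subtype_compl, hst])
  refine ⟨Equiv.subtypeCongr e f, fun i => ?_⟩
  by_cases hi : i ∈ s
  · simp [Equiv.subtypeCongr, hi]
  · simpa [Equiv.subtypeCongr, hi] using (f ⟨i, hi⟩).2

namespace Matrix

section CommSemiring

variable {ι m R : Type*} [Fintype ι] [Fintype m] [CommSemiring R]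

lemma mulVec_dotProduct (A : Matrix m ι R) (v : ι → R) (x : m → R) :
    (A *ᵥ v) ⬝ᵥ x = v ⬝ᵥ (Aᵀ *ᵥ x) := by
  rw [dotProduct_transpose_mulVec, dotProduct_comm]

lemma mulVec_dotProduct_mulVec (G : Matrix m m R) (P : Matrix m ι R) (v w : ι → R) :
    (P *ᵥ v) ⬝ᵥ (G *ᵥ (P *ᵥ w)) = v ⬝ᵥ ((Pᵀ * G * P) *ᵥ w) := by
  rw [mulVec_dotProduct, mulVec_mulVec, mulVec_mulVec, Matrix.mul_assoc]

lemma forall_dotProduct_mulVec_eq_iff [DecidableEq ι] {A B : Matrix ι ι R} :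
    (∀ v w : ι → R, v ⬝ᵥ (A *ᵥ w) = v ⬝ᵥ (B *ᵥ w)) ↔ A = B := by
  refine ⟨fun h => ?_, fun h _ _ => h ▸ rfl⟩
  ext i j
  simpa [mulVec_single, single_dotProduct] using h (Pi.single i 1) (Pi.single j 1)

lemma forall_mulVec_dotProduct_mulVec_iff [DecidableEq ι] {G g : Matrix ι ι R} :
    (∀ v w : ι → R, (g *ᵥ v) ⬝ᵥ (G *ᵥ (g *ᵥ w)) = v ⬝ᵥ (G *ᵥ w)) ↔ gᵀ * G * g = G := by
  simp only [mulVec_dotProduct_mulVec, forall_dotProduct_mulVec_eq_iff]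

end CommSemiring

lemma forall_mulVec_dotProduct_comm_iff {ι R : Type*} [Fintype ι] [DecidableEq ι] [CommRing R]
    {G T : Matrix ι ι R} :
    (∀ v w : ι → R, (T *ᵥ v) ⬝ᵥ (G *ᵥ w) = v ⬝ᵥ (G *ᵥ (T *ᵥ w))) ↔ G.IsSelfAdjoint T := by
  simp only [mulVec_dotProduct, mulVec_mulVec, forall_dotProduct_mulVec_eq_iff]
  rfl

lemma eq_diagonal_diag_of_commute {ι R : Type*} [Fintype ι] [DecidableEq ι] [CommRing R]
    [IsDomain R] {r : ι → R} (hr : Function.Injective r) {M : Matrix ι ι R}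
    (h : M * diagonal r = diagonal r * M) : M = diagonal M.diag := by
  ext i j
  rcases eq_or_ne i j with rfl | hij
  · simp
  · have hM : M i j * (r j - r i) = 0 := by
      have := congrFun₂ h i j
      rw [mul_diagonal, diagonal_mul] at this
      linear_combination this
    rw [diagonal_apply_ne _ hij]
    exact (mul_eq_zero.mp hM).resolve_right (sub_ne_zero.mpr (hr.ne hij).symm)

lemma exists_isUnit_mul_eq_mul_diagonal {ι K : Type*} [Fintype ι] [DecidableEq ι] [Field K]
    {T : Matrix ι ι K} {r : ι → K} (hr : Function.Injective r)
    (hT : T.charpoly = ∏ i, (X - C (r i))) :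
    ∃ P : Matrix ι ι K, IsUnit P ∧ T * P = P * diagonal r := by
  have hv : ∀ i, ∃ v, Module.End.HasEigenvector (toLin' T) (r i) v := fun i =>
    Module.End.HasEigenvalue.exists_hasEigenvector <|
      (Module.End.hasEigenvalue_iff_isRoot_charpoly _ _).mpr <| by
        simp [hT, Polynomial.eval_prod, Finset.prod_eq_zero_iff, sub_eq_zero]
  choose v hv using hv
  refine ⟨(of v)ᵀ, ?_, ?_⟩
  · exact (isUnit_transpose _).mpr <| linearIndependent_rows_iff_isUnit.mp <|
      Module.End.eigenvectors_linearIndependent' _ r hr v hv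
  · ext a i
    have := congrFun (Module.End.mem_eigenspace_iff.mp (hv i).1) a
    rw [mul_diagonal]
    simpa [mul_apply, mulVec, dotProduct, mul_comm] using this

section Signs

variable {ι : Type*} [Fintype ι] [DecidableEq ι] {G P P₀ : Matrix ι ι ℝ} {s s₀ t : Finset ι}

def signs (s : Finset ι) : ι → ℝ := fun i => if i ∈ s then 1 else -1

lemma signs_compl (s : Finset ι) : signs sᶜ = -signs s := by
  ext i; by_cases hi : i ∈ s <;> simp [signs, hi]

lemma isUnit_det_diagonal_signs (s : Finset ι) : IsUnit (diagonal (signs s)).det := by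
  rw [det_diagonal, isUnit_iff_ne_zero, Finset.prod_ne_zero_iff]
  intro i _
  unfold signs
  split_ifs <;> norm_num

lemma isUnit_det_of_transpose_mul_mul_eq (hP : Pᵀ * G * P = diagonal (signs s)) :
    IsUnit P.det := by
  have := isUnit_det_diagonal_signs s
  rw [← hP, det_mul] at this
  exact isUnit_of_mul_isUnit_right this

lemma exists_diagonal_mul_mul_diagonal_eq_signs {d : ι → ℝ} (hd : ∀ i, d i ≠ 0) :
    ∃ (c : ι → ℝ) (s : Finset ι), diagonal c * diagonal d * diagonal c = diagonal (signs s) := by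
  refine ⟨fun i => (√|d i|)⁻¹, Finset.univ.filter fun i => 0 < d i, ?_⟩
  rw [diagonal_mul_diagonal, diagonal_mul_diagonal]
  congr 1
  ext i
  have hsq : (√|d i|)⁻¹ * d i * (√|d i|)⁻¹ = d i / |d i| := by
    rw [mul_comm, ← mul_assoc, ← mul_inv, Real.mul_self_sqrt (abs_nonneg _), inv_mul_eq_div]
  rw [hsq]
  rcases (hd i).lt_or_gt with hneg | hpos
  · rw [abs_of_neg hneg, div_neg, div_self hneg.ne]; simp [signs, hneg.not_gt]
  · rw [abs_of_pos hpos, div_self hpos.ne']; simp [signs, hpos]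

-- The columns of `P` indexed by `s` span a positive definite subspace, which meets the
-- subspace `{x | x = 0 on t}` only in `0`.
lemma card_le_card_of_forall_dotProduct_mulVec_nonpos
    (hP : Pᵀ * G * P = diagonal (signs s))
    (ht : ∀ x : ι → ℝ, (∀ j ∈ t, x j = 0) → x ⬝ᵥ (G *ᵥ x) ≤ 0) : s.card ≤ t.card := by
  by_contra! hlt
  let L : (ι → ℝ) →ₗ[ℝ] ({i // i ∉ s} → ℝ) × (t → ℝ) :=
    (LinearMap.funLeft ℝ ℝ Subtype.val).prod (LinearMap.funLeft ℝ ℝ Subtype.val ∘ₗ P.mulVecLin)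
  obtain ⟨c, hc, hc0⟩ : ∃ c ∈ LinearMap.ker L, c ≠ 0 :=
    Submodule.exists_mem_ne_zero_of_ne_bot <| LinearMap.ker_ne_bot_of_finrank_lt <| by
      simp only [Module.finrank_prod, Module.finrank_fintype_fun_eq_card,
        Fintype.card_subtype_compl, Fintype.card_coe]
      have := s.card_le_univ
      omega
  have hcs : ∀ i ∉ s, c i = 0 := fun i hi => congrFun (congrArg Prod.fst hc) ⟨i, hi⟩
  have hPc : ∀ j ∈ t, (P *ᵥ c) j = 0 := fun j hj => congrFun (congrArg Prod.snd hc) ⟨j, hj⟩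
  refine (ht _ hPc).not_gt ?_
  obtain ⟨i, hi⟩ := Function.ne_iff.mp hc0
  have his : i ∈ s := by_contra fun h => hi (hcs i h)
  rw [mulVec_dotProduct_mulVec, hP]
  simp only [dotProduct, mulVec_diagonal]
  refine Finset.sum_pos' (fun j _ => ?_) ⟨i, Finset.mem_univ _, ?_⟩
  · by_cases hj : j ∈ s
    · simp only [signs, hj, if_true, one_mul]; exact mul_self_nonneg _
    · simp [hcs j hj]
  · simp only [signs, his, if_true, one_mul]; exact mul_self_pos.mpr hi

lemma exists_transpose_mul_mul_eq_diagonal_signs (hG : G.IsSymm)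
    (hG2 : G * G = 1) : ∃ (P : Matrix ι ι ℝ) (s : Finset ι), Pᵀ * G * P = diagonal (signs s) := by
  have hH : G.IsHermitian := isHermitian_iff_isSymm.mpr hG
  set U := hH.eigenvectorUnitary
  set e := hH.eigenvalues
  have hU : star (U : Matrix ι ι ℝ) = (U : Matrix ι ι ℝ)ᵀ := by
    rw [star_eq_conjTranspose, conjTranspose_eq_transpose_of_trivial]
  have hD : (U : Matrix ι ι ℝ)ᵀ * G * U = diagonal e := by
    rw [← hU]
    simpa using hH.conjStarAlgAut_star_eigenvectorUnitary
  have he : ∀ i, e i * e i = 1 := by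
    have : diagonal e * diagonal e = 1 := by
      rw [← hD]
      have hUU : (U : Matrix ι ι ℝ) * (U : Matrix ι ι ℝ)ᵀ = 1 := by
        rw [← hU, ← mem_unitaryGroup_iff]; exact U.2
      calc (U : Matrix ι ι ℝ)ᵀ * G * U * ((U : Matrix ι ι ℝ)ᵀ * G * U)
          = (U : Matrix ι ι ℝ)ᵀ * G * (U * (U : Matrix ι ι ℝ)ᵀ) * G * U := by
            simp only [Matrix.mul_assoc]
        _ = 1 := by rw [hUU, Matrix.mul_one, Matrix.mul_assoc _ G G, hG2, Matrix.mul_one, ← hU,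
            ← mem_unitaryGroup_iff']; exact U.2
    intro i
    simpa using congrFun₂ this i i
  refine ⟨U, Finset.univ.filter fun i => 0 < e i, ?_⟩
  rw [hD]
  congr 1
  ext i
  rcases mul_self_eq_one_iff.mp (he i) with h | h <;> simp [signs, h]

lemma exists_transpose_mul_mul_eq_diagonal_signs_of_card_eq
    (hP₀ : P₀ᵀ * G * P₀ = diagonal (signs s₀)) (hs : s.card = s₀.card) :
    ∃ P : Matrix ι ι ℝ, Pᵀ * G * P = diagonal (signs s) := by
  obtain ⟨σ, hσ⟩ := Finset.exists_perm_apply_mem_iff hs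
  refine ⟨P₀.submatrix id σ, ?_⟩
  have : signs s₀ ∘ σ = signs s := funext fun i => by simp [signs, hσ]
  rw [← this, ← submatrix_diagonal_equiv, ← hP₀, transpose_submatrix,
    submatrix_mul _ _ _ id _ Function.bijective_id, submatrix_mul _ _ _ id _ Function.bijective_id,
    submatrix_id_id]

end Signs

section SignedEigenbasis

variable {ι : Type*} [Fintype ι] [DecidableEq ι] {G T T₁ T₂ P P₁ P₂ g : Matrix ι ι ℝ}
  {r : ι → ℝ} {s s₁ s₂ : Finset ι}

structure IsSignedEigenbasis (G T P : Matrix ι ι ℝ) (r : ι → ℝ) (s : Finset ι) : Prop where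
  mul_eq : T * P = P * diagonal r
  transpose_mul_mul : Pᵀ * G * P = diagonal (signs s)

lemma IsSignedEigenbasis.isUnit_det (h : IsSignedEigenbasis G T P r s) : IsUnit P.det :=
  isUnit_det_of_transpose_mul_mul_eq h.transpose_mul_mul

lemma exists_isSignedEigenbasis_of_diagonal {Q : Matrix ι ι ℝ} {d : ι → ℝ}
    (hTQ : T * Q = Q * diagonal r) (hQ : Qᵀ * G * Q = diagonal d) (hd : ∀ i, d i ≠ 0) :
    ∃ P s, IsSignedEigenbasis G T P r s := by
  obtain ⟨c, s, hc⟩ := exists_diagonal_mul_mul_diagonal_eq_signs hd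
  refine ⟨Q * diagonal c, s, ?_, ?_⟩
  · rw [← Matrix.mul_assoc, hTQ, Matrix.mul_assoc, (commute_diagonal r c).eq, Matrix.mul_assoc]
  · rw [transpose_mul, diagonal_transpose, ← hc, ← hQ]
    simp only [Matrix.mul_assoc]

lemma transpose_mul_mul_commute_diagonal {Q : Matrix ι ι ℝ} (hT : G.IsSelfAdjoint T)
    (hTQ : T * Q = Q * diagonal r) : Qᵀ * G * Q * diagonal r = diagonal r * (Qᵀ * G * Q) := by
  have hT' : Tᵀ * G = G * T := hT
  calc Qᵀ * G * Q * diagonal r = Qᵀ * (G * T) * Q := by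
        rw [Matrix.mul_assoc, ← hTQ]; simp only [Matrix.mul_assoc]
    _ = (T * Q)ᵀ * G * Q := by rw [← hT', transpose_mul]; simp only [Matrix.mul_assoc]
    _ = diagonal r * (Qᵀ * G * Q) := by
        rw [hTQ, transpose_mul, diagonal_transpose]; simp only [Matrix.mul_assoc]

theorem exists_isSignedEigenbasis (hG : IsUnit G.det) (hT : G.IsSelfAdjoint T)
    (hr : Function.Injective r) (hcp : T.charpoly = ∏ i, (X - C (r i))) :
    ∃ P s, IsSignedEigenbasis G T P r s := by
  obtain ⟨Q, hQ, hTQ⟩ := exists_isUnit_mul_eq_mul_diagonal hr hcp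
  have hM := eq_diagonal_diag_of_commute hr (transpose_mul_mul_commute_diagonal hT hTQ)
  have hMu : IsUnit (Qᵀ * G * Q).det := by
    have hQ' := (isUnit_iff_isUnit_det Q).mp hQ
    rw [det_mul, det_mul, det_transpose]
    exact (hQ'.mul hG).mul hQ'
  refine exists_isSignedEigenbasis_of_diagonal hTQ hM fun i => ?_
  rw [hM, det_diagonal] at hMu
  exact Finset.prod_ne_zero_iff.mp hMu.ne_zero i (Finset.mem_univ i)

theorem IsSignedEigenbasis.signs_eq (hr : Function.Injective r)
    (h₁ : IsSignedEigenbasis G T P₁ r s₁) (h₂ : IsSignedEigenbasis G T P₂ r s₂) : s₁ = s₂ := by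
  have hP₁ := (isUnit_iff_isUnit_det P₁).mpr h₁.isUnit_det
  set C := P₁⁻¹ * P₂
  have hP₂ : P₁ * C = P₂ := mul_nonsing_inv_cancel_left _ _ h₁.isUnit_det
  have hC : C = diagonal C.diag := eq_diagonal_diag_of_commute hr <| hP₁.mul_left_cancel <| calc
    P₁ * (C * diagonal r) = T * P₂ := by rw [← Matrix.mul_assoc, hP₂, h₂.mul_eq]
    _ = P₁ * (diagonal r * C) := by rw [← hP₂, ← Matrix.mul_assoc, h₁.mul_eq, Matrix.mul_assoc]
  set c := C.diag
  rw [hC] at hP₂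
  have key : diagonal (signs s₂) = diagonal fun i => c i * signs s₁ i * c i := by
    rw [← h₂.transpose_mul_mul, ← hP₂, transpose_mul, diagonal_transpose,
      ← diagonal_mul_diagonal, ← diagonal_mul_diagonal, ← h₁.transpose_mul_mul]
    simp only [Matrix.mul_assoc]
  ext i
  have hi : signs s₂ i = c i * signs s₁ i * c i := congrFun (diagonal_injective key) i
  have hc := mul_self_nonneg (c i)
  simp only [signs] at hi
  split_ifs at hi <;> first | nlinarith | simp [*]

lemma IsSignedEigenbasis.mul_left (h : IsSignedEigenbasis G T₁ P r s)
    (hg : gᵀ * G * g = G) (hgT : g * T₁ = T₂ * g) : IsSignedEigenbasis G T₂ (g * P) r s where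
  mul_eq := by rw [← Matrix.mul_assoc, ← hgT, Matrix.mul_assoc, h.mul_eq, Matrix.mul_assoc]
  transpose_mul_mul := calc
    (g * P)ᵀ * G * (g * P) = Pᵀ * (gᵀ * G * g) * P := by
      rw [transpose_mul]; simp only [Matrix.mul_assoc]
    _ = diagonal (signs s) := by rw [hg, h.transpose_mul_mul]

lemma IsSignedEigenbasis.mul_inv (h₁ : IsSignedEigenbasis G T₁ P₁ r s)
    (h₂ : IsSignedEigenbasis G T₂ P₂ r s) :
    (P₂ * P₁⁻¹)ᵀ * G * (P₂ * P₁⁻¹) = G ∧ P₂ * P₁⁻¹ * T₁ = T₂ * (P₂ * P₁⁻¹) := by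
  have hP₁ := h₁.isUnit_det
  constructor
  · calc (P₂ * P₁⁻¹)ᵀ * G * (P₂ * P₁⁻¹) = P₁⁻¹ᵀ * (P₂ᵀ * G * P₂) * P₁⁻¹ := by
          rw [transpose_mul]; simp only [Matrix.mul_assoc]
      _ = P₁ᵀ⁻¹ * P₁ᵀ * G * (P₁ * P₁⁻¹) := by
          rw [h₂.transpose_mul_mul, ← h₁.transpose_mul_mul, transpose_nonsing_inv]
          simp only [Matrix.mul_assoc]
      _ = G := by
          rw [nonsing_inv_mul _ (isUnit_det_transpose _ hP₁), mul_nonsing_inv _ hP₁,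
            Matrix.one_mul, Matrix.mul_one]
  · calc P₂ * P₁⁻¹ * T₁ = P₂ * P₁⁻¹ * T₁ * (P₁ * P₁⁻¹) := by
          rw [mul_nonsing_inv _ hP₁, Matrix.mul_one]
      _ = P₂ * (P₁⁻¹ * P₁) * diagonal r * P₁⁻¹ := by
          rw [← Matrix.mul_assoc, Matrix.mul_assoc _ T₁, h₁.mul_eq]; simp only [Matrix.mul_assoc]
      _ = T₂ * (P₂ * P₁⁻¹) := by
          rw [nonsing_inv_mul _ hP₁, Matrix.mul_one, ← h₂.mul_eq, Matrix.mul_assoc]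

lemma exists_det_eq_one_of_odd (hodd : Odd (Fintype.card ι)) (hG : IsUnit G.det)
    (hg : gᵀ * G * g = G) (hgT : g * T₁ = T₂ * g) :
    ∃ g' : Matrix ι ι ℝ, g'ᵀ * G * g' = G ∧ g'.det = 1 ∧ g' * T₁ = T₂ * g' := by
  have hdet : g.det * g.det = 1 := by
    have := congrArg det hg
    rw [det_mul, det_mul, det_transpose] at this
    exact mul_right_cancel₀ hG.ne_zero (by linear_combination this)
  rcases mul_self_eq_one_iff.mp hdet with h | h
  · exact ⟨g, hg, h, hgT⟩
  · refine ⟨-g, by simpa using hg, by rw [det_neg, h, hodd.neg_one_pow]; norm_num, ?_⟩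
    rw [Matrix.neg_mul, Matrix.mul_neg, hgT]

lemma isSignedEigenbasis_mul_diagonal_mul_inv (hP : Pᵀ * G * P = diagonal (signs s)) (r : ι → ℝ) :
    IsSignedEigenbasis G (P * diagonal r * P⁻¹) P r s where
  mul_eq := by
    rw [Matrix.mul_assoc, nonsing_inv_mul _ (isUnit_det_of_transpose_mul_mul_eq hP),
      Matrix.mul_one]
  transpose_mul_mul := hP

lemma IsSignedEigenbasis.eq_mul_diagonal_mul_inv (h : IsSignedEigenbasis G T P r s) :
    T = P * diagonal r * P⁻¹ := by
  rw [← h.mul_eq, Matrix.mul_assoc, mul_nonsing_inv _ h.isUnit_det, Matrix.mul_one]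

lemma IsSignedEigenbasis.isSelfAdjoint (h : IsSignedEigenbasis G T P r s) : G.IsSelfAdjoint T := by
  rw [h.eq_mul_diagonal_mul_inv]
  refine (isAdjointPair_equiv G _ _ P ((isUnit_iff_isUnit_det P).mpr h.isUnit_det)).mp ?_
  rw [h.transpose_mul_mul]
  change (diagonal r)ᵀ * diagonal (signs s) = diagonal (signs s) * diagonal r
  rw [diagonal_transpose]
  exact (commute_diagonal _ _).eq

lemma IsSignedEigenbasis.charpoly_eq (h : IsSignedEigenbasis G T P r s) :
    T.charpoly = ∏ i, (X - C (r i)) := by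
  rw [h.eq_mul_diagonal_mul_inv, ← charpoly_diagonal]
  exact charpoly_units_conj ((isUnit_iff_isUnit_det P).mpr h.isUnit_det).unit _

end SignedEigenbasis

theorem card_quot_conj_selfAdjoint_eq {ι : Type*} [Fintype ι] [DecidableEq ι]
    (hodd : Odd (Fintype.card ι)) {G : Matrix ι ι ℝ} (hG : IsUnit G.det) {r : ι → ℝ}
    (hr : Function.Injective r) :
    Nat.card (Quot fun T₁ T₂ : {T : Matrix ι ι ℝ //
          (∀ v w : ι → ℝ, (T *ᵥ v) ⬝ᵥ (G *ᵥ w) = v ⬝ᵥ (G *ᵥ (T *ᵥ w))) ∧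
          T.charpoly = ∏ i, (X - C (r i))} =>
        ∃ g : Matrix ι ι ℝ, (∀ v w : ι → ℝ, (g *ᵥ v) ⬝ᵥ (G *ᵥ (g *ᵥ w)) = v ⬝ᵥ (G *ᵥ w)) ∧
          g.det = 1 ∧ g * T₁.val = T₂.val * g) =
      Nat.card {s : Finset ι // ∃ P : Matrix ι ι ℝ, Pᵀ * G * P = diagonal (signs s)} := by
  refine Nat.card_quot_eq_of_classifying (fun T s => ∃ P, IsSignedEigenbasis G T.1 P r s.1)
    ?_ ?_ ?_ ?_ ?_
  · rintro ⟨T, hT, hcp⟩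
    obtain ⟨P, s, hP⟩ :=
      exists_isSignedEigenbasis hG (forall_mulVec_dotProduct_comm_iff.mp hT) hr hcp
    exact ⟨⟨s, P, hP.transpose_mul_mul⟩, P, hP⟩
  · rintro T ⟨s₁, _⟩ ⟨s₂, _⟩ ⟨P₁, h₁⟩ ⟨P₂, h₂⟩
    exact Subtype.ext (h₁.signs_eq hr h₂)
  · rintro T₁ T₂ s ⟨g, hg, -, hgT⟩ ⟨P, hP⟩
    exact ⟨g * P, hP.mul_left (forall_mulVec_dotProduct_mulVec_iff.mp hg) hgT⟩
  · rintro T₁ T₂ s ⟨P₁, h₁⟩ ⟨P₂, h₂⟩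
    obtain ⟨hg, hgT⟩ := h₁.mul_inv h₂
    obtain ⟨g, hg, hdet, hgT⟩ := exists_det_eq_one_of_odd hodd hG hg hgT
    exact ⟨g, forall_mulVec_dotProduct_mulVec_iff.mpr hg, hdet, hgT⟩
  · rintro ⟨s, P, hP⟩
    have h := isSignedEigenbasis_mul_diagonal_mul_inv hP r
    exact ⟨⟨_, forall_mulVec_dotProduct_comm_iff.mpr h.isSelfAdjoint, h.charpoly_eq⟩, P, h⟩

end Matrix

section SplitGram

variable {k : Type*} [Field k] (n : ℕ)

lemma splitGram_apply (i j : Fin (2 * n + 1)) :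
    splitGram k n i j = if j = i.rev then 1 else 0 := by
  have : (i : ℕ) + j = 2 * n ↔ j = i.rev := by
    rw [Fin.ext_iff, Fin.val_rev]
    omega
  simp only [splitGram, of_apply, this]

lemma splitGram_mulVec (x : Fin (2 * n + 1) → k) : splitGram k n *ᵥ x = fun i => x i.rev := by
  ext i
  simp [mulVec, dotProduct, splitGram_apply]

lemma splitGram_isSymm : (splitGram k n).IsSymm := by
  ext i j
  simp only [transpose_apply, splitGram, of_apply, add_comm]

lemma splitGram_mul_self : splitGram k n * splitGram k n = 1 := by
  ext i j
  simp [mul_apply, splitGram_apply, one_apply, eq_comm (a := j), Fin.rev_eq_iff]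

lemma isUnit_det_splitGram : IsUnit (splitGram k n).det :=
  isUnit_det_of_left_inverse (splitGram_mul_self n)

-- The indices `j < n`, `j = n`, `j > n` stand for `e₁, …, eₙ`, `u`, `fₙ, …, f₁`.
lemma dotProduct_splitGram_mulVec_eq_zero {x : Fin (2 * n + 1) → k}
    (hx : ∀ j : Fin (2 * n + 1), n ≤ (j : ℕ) → x j = 0) : x ⬝ᵥ (splitGram k n *ᵥ x) = 0 := by
  rw [splitGram_mulVec, dotProduct]
  refine Finset.sum_eq_zero fun i _ => ?_
  by_cases hi : n ≤ (i : ℕ)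
  · rw [hx i hi, zero_mul]
  · rw [hx i.rev (by rw [Fin.val_rev]; omega), mul_zero]

lemma dotProduct_splitGram_mulVec_nonneg {x : Fin (2 * n + 1) → ℝ}
    (hx : ∀ j : Fin (2 * n + 1), n < (j : ℕ) → x j = 0) : 0 ≤ x ⬝ᵥ (splitGram ℝ n *ᵥ x) := by
  let m : Fin (2 * n + 1) := ⟨n, by omega⟩
  rw [splitGram_mulVec, dotProduct, Finset.sum_eq_single m]
  · have hm : m.rev = m := Fin.ext (by simp only [Fin.val_rev, m]; omega)
    simpa only [hm] using mul_self_nonneg (x m)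
  · intro i _ him
    have him' : (i : ℕ) ≠ n := fun h => him (Fin.ext h)
    rcases him'.lt_or_gt with hi | hi
    · rw [hx i.rev (by rw [Fin.val_rev]; omega), mul_zero]
    · rw [hx i hi, zero_mul]
  · simp

lemma card_eq_of_transpose_mul_splitGram_mul {P : Matrix (Fin (2 * n + 1)) (Fin (2 * n + 1)) ℝ}
    {s : Finset (Fin (2 * n + 1))} (hP : Pᵀ * splitGram ℝ n * P = diagonal (signs s)) :
    s.card = n + 1 := by
  let m : Fin (2 * n + 1) := ⟨n, by omega⟩
  have h₁ := card_le_card_of_forall_dotProduct_mulVec_nonpos hP (t := Finset.Ici m) fun x hx =>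
    (dotProduct_splitGram_mulVec_eq_zero n fun j hj => hx j (Finset.mem_Ici.mpr hj)).le
  have h₂ := card_le_card_of_forall_dotProduct_mulVec_nonpos (G := -splitGram ℝ n) (P := P)
    (s := sᶜ) (by rw [Matrix.mul_neg, Matrix.neg_mul, hP, signs_compl, diagonal_neg]; rfl)
    (t := Finset.Ioi m) fun x hx => by
      rw [neg_mulVec, dotProduct_neg, neg_nonpos]
      exact dotProduct_splitGram_mulVec_nonneg n fun j hj => hx j (Finset.mem_Ioi.mpr hj)
  rw [Fin.card_Ici] at h₁
  rw [Finset.card_compl, Fin.card_Ioi] at h₂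
  simp only [Fintype.card_fin, m] at h₁ h₂
  omega

lemma exists_transpose_mul_splitGram_mul_iff {s : Finset (Fin (2 * n + 1))} :
    (∃ P, Pᵀ * splitGram ℝ n * P = diagonal (signs s)) ↔ s.card = n + 1 := by
  refine ⟨fun ⟨_, hP⟩ => card_eq_of_transpose_mul_splitGram_mul n hP, fun hs => ?_⟩
  obtain ⟨P₀, s₀, hP₀⟩ :=
    exists_transpose_mul_mul_eq_diagonal_signs (splitGram_isSymm n) (splitGram_mul_self n)
  exact exists_transpose_mul_mul_eq_diagonal_signs_of_card_eq hP₀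
    (hs.trans (card_eq_of_transpose_mul_splitGram_mul n hP₀).symm)

end SplitGram

theorem card_real_orbits_self_adjoint_general (n : ℕ) (f : ℝ[X])
    (hroots : ∃ r : Fin (2 * n + 1) → ℝ, Function.Injective r ∧
      f = ∏ i : Fin (2 * n + 1), (X - C (r i))) :
    Nat.card (Quot fun T₁ T₂ : {T : Matrix (Fin (2 * n + 1)) (Fin (2 * n + 1)) ℝ //
          (∀ v w : Fin (2 * n + 1) → ℝ,
            splitBilin (T.mulVec v) w = splitBilin v (T.mulVec w)) ∧
          Matrix.charpoly T = f} =>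
        ∃ g : Matrix (Fin (2 * n + 1)) (Fin (2 * n + 1)) ℝ,
          (∀ v w : Fin (2 * n + 1) → ℝ,
            splitBilin (g.mulVec v) (g.mulVec w) = splitBilin v w) ∧
          Matrix.det g = 1 ∧ g * T₁.val = T₂.val * g) =
      Nat.choose (2 * n + 1) n := by
  obtain ⟨r, hr, rfl⟩ := hroots
  refine (card_quot_conj_selfAdjoint_eq (by simp) (isUnit_det_splitGram n) hr).trans ?_
  rw [Nat.card_congr (Equiv.subtypeEquivRight fun s => exists_transpose_mul_splitGram_mul_iff n),
    Nat.card_eq_fintype_card, Fintype.card_finset_len, Fintype.card_fin, Nat.choose_symm_half]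

/-- Let `n ≥ 1`, let `W` be the split orthogonal space of dimension `2n+1` over `ℝ`, and
let `f ∈ ℝ[x]` be monic of degree `2n+1` with `2n+1` distinct roots, all real.  Then
`SO(W)(ℝ)`, acting by conjugation on the self-adjoint endomorphisms of `W` with
characteristic polynomial `f`, has exactly `C(2n+1, n)` orbits. -/
theorem card_real_orbits_self_adjoint (n : ℕ) (hn : 1 ≤ n) (f : ℝ[X])
    (hroots : ∃ r : Fin (2 * n + 1) → ℝ, Function.Injective r ∧
      f = ∏ i : Fin (2 * n + 1), (X - C (r i))) :
    Nat.card (Quot fun T₁ T₂ : {T : Matrix (Fin (2 * n + 1)) (Fin (2 * n + 1)) ℝ //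
          (∀ v w : Fin (2 * n + 1) → ℝ,
            splitBilin (T.mulVec v) w = splitBilin v (T.mulVec w)) ∧
          Matrix.charpoly T = f} =>
        ∃ g : Matrix (Fin (2 * n + 1)) (Fin (2 * n + 1)) ℝ,
          (∀ v w : Fin (2 * n + 1) → ℝ,
            splitBilin (g.mulVec v) (g.mulVec w) = splitBilin v w) ∧
          Matrix.det g = 1 ∧ g * T₁.val = T₂.val * g) =
      Nat.choose (2 * n + 1) n :=
  card_real_orbits_self_adjoint_general n f hroots
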